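/- Let G be a graph in which every vertex of a set S has degree at least d, every set of at most |S| vertices induces at most 3 times as many edges as vertices (in particular S induces at most 3|S| edges), and every two distinct vertices have at most two common neighbors. Let π be a permutation whose support is exactly S. Then π maps at least (d − 8)|S| edges of G to non-edges of G. -/

import Mathlib

/-!
Summing degrees over `S` counts each edge meeting `S` once and each edge inside `S` once more,
so at least `d|S| - 3|S|` edges meet `S`. An edge meeting `S` that `π` maps to an edge either
lies inside `S` (at most `3|S|` of them), or is `s(v, w)` with `v ∈ S` and `w ∉ S`; then `π` fixes
`w`, so `w` is a common neighbour of `v ≠ π v`, which happens for at most two `w` per `v`.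
-/

open Finset

lemma Sym2.card_filter_mem_le {V : Type*} [Fintype V] [DecidableEq V]
    (S : Finset V) (e : Sym2 V) :
    #(S.filter (· ∈ e)) ≤
      (if ∀ x ∈ e, x ∈ S then 1 else 0) + (if ∃ x ∈ e, x ∈ S then 1 else 0) := by
  induction e with
  | _ a b =>
    have hfilter : S.filter (· ∈ s(a, b)) ⊆ S.filter (· = a) ∪ S.filter (· = b) := by
      intro v; simp +contextual
    refine (card_le_card hfilter).trans ((card_union_le _ _).trans ?_)
    by_cases ha : a ∈ S <;> by_cases hb : b ∈ S <;> simp [filter_eq', ha, hb]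

namespace SimpleGraph

variable {V : Type*} [Fintype V] [DecidableEq V] (G : SimpleGraph V) [DecidableRel G.Adj]

def edgesMeeting (S : Finset V) : Finset (Sym2 V) :=
  G.edgeFinset.filter fun e => ∃ x ∈ e, x ∈ S

def edgesInside (S : Finset V) : Finset (Sym2 V) :=
  G.edgeFinset.filter fun e => ∀ x ∈ e, x ∈ S

lemma sum_degree_le_card_edgesMeeting_add_card_edgesInside (S : Finset V) :
    ∑ v ∈ S, G.degree v ≤ #(G.edgesMeeting S) + #(G.edgesInside S) := by
  calc ∑ v ∈ S, G.degree v
      = ∑ e ∈ G.edgeFinset, #(S.filter (· ∈ e)) := by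
        simp_rw [← card_incidenceFinset_eq_degree, incidenceFinset_eq_filter]
        exact sum_card_bipartiteAbove_eq_sum_card_bipartiteBelow _
    _ ≤ ∑ e ∈ G.edgeFinset,
          ((if ∀ x ∈ e, x ∈ S then 1 else 0) + (if ∃ x ∈ e, x ∈ S then 1 else 0)) :=
        sum_le_sum fun e _ => Sym2.card_filter_mem_le S e
    _ = #(G.edgesMeeting S) + #(G.edgesInside S) := by
        rw [sum_add_distrib, edgesMeeting, edgesInside, card_filter, card_filter, add_comm]

lemma card_filter_map_mem_edgeFinset_le (S : Finset V) (f : V → V) (hfix : ∀ v ∉ S, f v = v) :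
    #((G.edgesMeeting S).filter fun e => e.map f ∈ G.edgeFinset) ≤
      #(G.edgesInside S) + ∑ v ∈ S, #(univ.filter fun w => G.Adj v w ∧ G.Adj (f v) w) := by
  have hsub : (G.edgesMeeting S).filter (fun e => e.map f ∈ G.edgeFinset) ⊆
      G.edgesInside S ∪
        S.biUnion fun v => (univ.filter fun w => G.Adj v w ∧ G.Adj (f v) w).image (s(v, ·)) := by
    intro e he
    simp only [edgesMeeting, mem_filter] at he
    obtain ⟨⟨he, v, hve, hvS⟩, hmap⟩ := he
    obtain ⟨w, rfl⟩ := Sym2.mem_iff_exists.mp hve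
    by_cases hwS : w ∈ S
    · refine mem_union_left _ (mem_filter.mpr ⟨he, fun x hx => ?_⟩)
      rcases Sym2.mem_iff.mp hx with rfl | rfl <;> assumption
    · rw [Sym2.map_mk, hfix w hwS, mem_edgeFinset, mem_edgeSet] at hmap
      rw [mem_edgeFinset, mem_edgeSet] at he
      refine mem_union_right _ (mem_biUnion.mpr ⟨v, hvS, mem_image.mpr ⟨w, ?_, rfl⟩⟩)
      simp [he, hmap]
  calc _ ≤ _ := card_le_card hsub
    _ ≤ _ := card_union_le _ _
    _ ≤ _ := by grw [card_biUnion_le, sum_le_sum fun v _ => card_image_le]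

end SimpleGraph

/-- Let `G` be a graph in which every vertex of a set `S` has degree
at least `d`, every vertex set of size at most `|S|` induces at most 3 times as
many edges as vertices, and every two distinct vertices have at most two common
neighbors. If `π` is a permutation with support exactly `S`, then `π` maps at
least `(d-8)|S|` edges of `G` to non-edges of `G`. -/
theorem stmt9 {V : Type*} [Fintype V] [DecidableEq V]
    (G : SimpleGraph V) [DecidableRel G.Adj] (d : ℕ) (S : Finset V)
    (hdeg : ∀ v ∈ S, d ≤ G.degree v)
    (hind : ∀ T : Finset V, T.card ≤ S.card →
      (G.edgeFinset.filter fun e => ∀ x ∈ e, x ∈ T).card ≤ 3 * T.card)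
    (hcn : ∀ x y : V, x ≠ y →
      (Finset.univ.filter fun w => G.Adj x w ∧ G.Adj y w).card ≤ 2)
    (π : Equiv.Perm V)
    (hmove : ∀ v ∈ S, π v ≠ v) (hfix : ∀ v ∉ S, π v = v) :
    ((d : ℤ) - 8) * S.card
      ≤ ((G.edgeFinset.filter fun e => e.map π ∉ G.edgeFinset).card : ℤ) := by
  set bad := G.edgeFinset.filter fun e => e.map π ∉ G.edgeFinset
  set kept := (G.edgesMeeting S).filter fun e => e.map π ∈ G.edgeFinset
  have hinside : #(G.edgesInside S) ≤ 3 * #S := hind S le_rfl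
  have hmeeting : d * #S ≤ #(G.edgesMeeting S) + #(G.edgesInside S) :=
    calc d * #S = ∑ _v ∈ S, d := by rw [sum_const, smul_eq_mul, mul_comm]
      _ ≤ ∑ v ∈ S, G.degree v := sum_le_sum hdeg
      _ ≤ _ := G.sum_degree_le_card_edgesMeeting_add_card_edgesInside S
  have hsplit : #(G.edgesMeeting S) ≤ #kept + #bad := by
    rw [← card_filter_add_card_filter_not (fun e => e.map π ∈ G.edgeFinset)]
    gcongr
    exact filter_subset_filter _ (filter_subset _ _)
  have hkept : #kept ≤ #(G.edgesInside S) + 2 * #S :=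
    calc #kept
        ≤ #(G.edgesInside S) + ∑ v ∈ S, #(univ.filter fun w => G.Adj v w ∧ G.Adj (π v) w) :=
          G.card_filter_map_mem_edgeFinset_le S π hfix
      _ ≤ #(G.edgesInside S) + ∑ _v ∈ S, 2 := by
          gcongr with v hv
          exact hcn v (π v) (hmove v hv).symm
      _ = _ := by rw [sum_const, smul_eq_mul, mul_comm]
  have hbad : d * #S ≤ #bad + 8 * #S := by omega
  zify at hbad
  linarith
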